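/- Let A > 0, V > 0, and B be real constants. For each δ > 0 let u_δ : [0,1] → ℝ be a C² function satisfying the ordinary differential equation (1/2)δA·u_δ''(x) + δB·u_δ'(x) − V·u_δ(x) = 0 for all x ∈ (0,1), with boundary conditions u_δ(0) = u_δ(1) = 1. Then lim_{δ→0⁺} δ^{1/2} u_δ'(0) = −√(2V/A). -/

import Mathlib

/-!
For fixed `δ > 0` the characteristic equation `½δA r² + δB r = V` has two roots `r₋ < 0 < r₊`.
Since `V > 0`, the maximum principle makes the boundary value problem uniquely solvable, so
`u_δ = c e^{r₊ x} + (1 - c) e^{r₋ x}` with `c = (1 - e^{r₋}) / (e^{r₊} - e^{r₋})`, and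
`u_δ'(0) = r₋ + c (r₊ - r₋)`. As `δ → 0⁺`, `√δ r_± → ±√(2V/A)`; hence `r_± → ±∞`, `c → 0`, and
`√δ u_δ'(0) → -√(2V/A)`.
-/

open MeasureTheory Filter Set Metric
open scoped Topology ENNReal NNReal

noncomputable section

abbrev Euc (d : ℕ) := EuclideanSpace ℝ (Fin d)

/-- The `i`-th partial derivative of `f` at `x`. -/
def pd {d : ℕ} (i : Fin d) (f : Euc d → ℝ) (x : Euc d) : ℝ :=
  fderiv ℝ f x (EuclideanSpace.single i 1)

/-- The operator `L = (1/2) ∇·a∇ + b·∇`. -/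
def opL {d : ℕ} (a : Euc d → Fin d → Fin d → ℝ) (b : Euc d → Fin d → ℝ)
    (f : Euc d → ℝ) (x : Euc d) : ℝ :=
  (1 / 2) * (∑ i, ∑ j, pd i (fun y => a y i j * pd j f y) x) + ∑ i, b x i * pd i f x

/-- The formal adjoint `L̃ = (1/2) ∇·a∇ − b·∇ − (∇·b)`. -/
def opLt {d : ℕ} (a : Euc d → Fin d → Fin d → ℝ) (b : Euc d → Fin d → ℝ)
    (f : Euc d → ℝ) (x : Euc d) : ℝ :=
  (1 / 2) * (∑ i, ∑ j, pd i (fun y => a y i j * pd j f y) x) - ∑ i, b x i * pd i f x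
    - (∑ i, pd i (fun y => b y i) x) * f x

/-- The inward unit normal vector determined by `Φ` (as a tuple of components). -/
def nvec {d : ℕ} (Φ : Euc d → ℝ) (x : Euc d) : Fin d → ℝ :=
  fun i => pd i Φ x / Real.sqrt (∑ j, (pd j Φ x) ^ 2)

/-- The quadratic form `n · a n`. -/
def nan {d : ℕ} (Φ : Euc d → ℝ) (a : Euc d → Fin d → Fin d → ℝ) (x : Euc d) : ℝ :=
  ∑ i, ∑ j, nvec Φ x i * a x i j * nvec Φ x j

/-- `(a ∇ρ) · n`. -/
def aGradN {d : ℕ} (Φ : Euc d → ℝ) (a : Euc d → Fin d → Fin d → ℝ)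
    (ρ : Euc d → ℝ) (x : Euc d) : ℝ :=
  ∑ i, ∑ j, nvec Φ x i * a x i j * pd j ρ x

open Real

lemma IsLocalMax.deriv_deriv_nonpos {f : ℝ → ℝ} {x₀ : ℝ} (h : IsLocalMax f x₀)
    (hc : ContinuousAt f x₀) : deriv (deriv f) x₀ ≤ 0 := by
  by_contra! hpos
  have hconst : f =ᶠ[𝓝 x₀] fun _ => f x₀ := by
    filter_upwards [h, isLocalMin_of_deriv_deriv_pos hpos h.deriv_eq_zero hc] with x hmax hmin
    exact le_antisymm hmax hmin
  have hzero : deriv (deriv f) x₀ = 0 := by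
    simpa using hconst.deriv.deriv_eq
  exact hpos.ne' hzero

theorem nonpos_of_ode_subsolution {a b c p q : ℝ} {w : ℝ → ℝ} (ha : 0 ≤ a) (hc : 0 < c)
    (hw : ContinuousOn w (Icc p q))
    (hsub : ∀ x ∈ Ioo p q, c * w x ≤ a * deriv (deriv w) x + b * deriv w x)
    (hp : w p ≤ 0) (hq : w q ≤ 0) {x : ℝ} (hx : x ∈ Icc p q) : w x ≤ 0 := by
  obtain ⟨x₀, hx₀, hmax⟩ := isCompact_Icc.exists_isMaxOn ⟨x, hx⟩ hw
  by_contra! hpos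
  have hpos₀ : 0 < w x₀ := hpos.trans_le (hmax hx)
  have hx₀' : x₀ ∈ Ioo p q := by
    refine ⟨hx₀.1.lt_of_ne ?_, hx₀.2.lt_of_ne ?_⟩ <;> rintro rfl <;> linarith
  have hnhds : Icc p q ∈ 𝓝 x₀ := Icc_mem_nhds hx₀'.1 hx₀'.2
  have hloc : IsLocalMax w x₀ := hmax.isLocalMax hnhds
  have hconcave := mul_nonpos_of_nonneg_of_nonpos ha
    (hloc.deriv_deriv_nonpos (hw.continuousAt hnhds))
  have hsub₀ := hsub x₀ hx₀'
  rw [hloc.deriv_eq_zero, mul_zero, add_zero] at hsub₀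
  linarith [mul_pos hc hpos₀]

theorem eqOn_of_ode_of_boundary_eq {a b c p q : ℝ} {u v : ℝ → ℝ} (ha : 0 ≤ a) (hc : 0 < c)
    (hu : ContDiffOn ℝ 2 u (Ioo p q)) (hv : ContDiffOn ℝ 2 v (Ioo p q))
    (hu' : ContinuousOn u (Icc p q)) (hv' : ContinuousOn v (Icc p q))
    (hodeu : ∀ x ∈ Ioo p q, a * deriv (deriv u) x + b * deriv u x - c * u x = 0)
    (hodev : ∀ x ∈ Ioo p q, a * deriv (deriv v) x + b * deriv v x - c * v x = 0)
    (hp : u p = v p) (hq : u q = v q) : EqOn u v (Icc p q) := by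
  have hdiff : ∀ x ∈ Ioo p q,
      a * deriv (deriv (u - v)) x + b * deriv (u - v) x - c * (u - v) x = 0 := by
    intro x hx
    have hnhds := isOpen_Ioo.mem_nhds hx
    have hd : ∀ y ∈ Ioo p q, deriv (u - v) y = deriv u y - deriv v y := fun y hy =>
      deriv_sub ((hu.contDiffAt (isOpen_Ioo.mem_nhds hy)).differentiableAt two_ne_zero)
        ((hv.contDiffAt (isOpen_Ioo.mem_nhds hy)).differentiableAt two_ne_zero)
    have hdd : deriv (deriv (u - v)) x = deriv (deriv u) x - deriv (deriv v) x := by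
      have heq : deriv (u - v) =ᶠ[𝓝 x] fun y => deriv u y - deriv v y :=
        eventually_of_mem hnhds hd
      rw [heq.deriv_eq]
      exact deriv_sub
        (((hu.deriv_of_isOpen isOpen_Ioo le_rfl).contDiffAt hnhds).differentiableAt_one)
        (((hv.deriv_of_isOpen isOpen_Ioo le_rfl).contDiffAt hnhds).differentiableAt_one)
    rw [hdd, hd x hx, Pi.sub_apply]
    linear_combination hodeu x hx - hodev x hx
  intro x hx
  have hle : (u - v) x ≤ 0 := nonpos_of_ode_subsolution (b := b) ha hc (hu'.sub hv')
    (fun y hy => by linarith [hdiff y hy]) (by simp [hp]) (by simp [hq]) hx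
  have hge : (-(u - v)) x ≤ 0 := nonpos_of_ode_subsolution (b := b) ha hc (hu'.sub hv').neg
    (fun y hy => by simp only [deriv.neg', deriv.fun_neg, Pi.neg_apply]; linarith [hdiff y hy])
    (by simp [hp]) (by simp [hq]) hx
  simp only [Pi.sub_apply, Pi.neg_apply] at hle hge
  linarith

lemma derivWithin_derivWithin_Icc_of_mem_Ioo {f : ℝ → ℝ} {p q x : ℝ} (hx : x ∈ Ioo p q) :
    derivWithin (derivWithin f (Icc p q)) (Icc p q) x = deriv (deriv f) x := by
  rw [derivWithin_of_mem_nhds (Icc_mem_nhds hx.1 hx.2)]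
  apply EventuallyEq.deriv_eq
  filter_upwards [Ioo_mem_nhds hx.1 hx.2] with y hy
  exact derivWithin_of_mem_nhds (Icc_mem_nhds hy.1 hy.2)

def expComb (c₁ c₂ r₁ r₂ x : ℝ) : ℝ := c₁ * exp (r₁ * x) + c₂ * exp (r₂ * x)

section expComb

variable {c₁ c₂ r₁ r₂ : ℝ}

lemma hasDerivAt_expComb (x : ℝ) :
    HasDerivAt (expComb c₁ c₂ r₁ r₂) (expComb (c₁ * r₁) (c₂ * r₂) r₁ r₂ x) x := by
  have h := (((hasDerivAt_id' x).const_mul r₁).exp.const_mul c₁).add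
    (((hasDerivAt_id' x).const_mul r₂).exp.const_mul c₂)
  refine h.congr_deriv ?_
  simp only [expComb]
  ring

lemma deriv_expComb : deriv (expComb c₁ c₂ r₁ r₂) = expComb (c₁ * r₁) (c₂ * r₂) r₁ r₂ :=
  funext fun x => (hasDerivAt_expComb x).deriv

lemma contDiff_expComb : ContDiff ℝ 2 (expComb c₁ c₂ r₁ r₂) := by
  unfold expComb
  fun_prop

lemma expComb_ode {a b c : ℝ} (h₁ : a * r₁ ^ 2 + b * r₁ - c = 0) (h₂ : a * r₂ ^ 2 + b * r₂ - c = 0)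
    (x : ℝ) :
    a * deriv (deriv (expComb c₁ c₂ r₁ r₂)) x + b * deriv (expComb c₁ c₂ r₁ r₂) x
      - c * expComb c₁ c₂ r₁ r₂ x = 0 := by
  simp only [deriv_expComb, expComb]
  linear_combination (c₁ * exp (r₁ * x)) * h₁ + (c₂ * exp (r₂ * x)) * h₂

end expComb

def dirichletCoeff (r₁ r₂ : ℝ) : ℝ := (1 - exp r₂) / (exp r₁ - exp r₂)

def dirichletSolution (r₁ r₂ : ℝ) : ℝ → ℝ :=
  expComb (dirichletCoeff r₁ r₂) (1 - dirichletCoeff r₁ r₂) r₁ r₂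

section dirichletSolution

variable {r₁ r₂ : ℝ}

lemma dirichletSolution_zero : dirichletSolution r₁ r₂ 0 = 1 := by
  simp [dirichletSolution, expComb]

lemma dirichletSolution_one (h : r₁ ≠ r₂) : dirichletSolution r₁ r₂ 1 = 1 := by
  have hne : exp r₁ - exp r₂ ≠ 0 := sub_ne_zero.2 (exp_injective.ne h)
  simp only [dirichletSolution, expComb, dirichletCoeff, mul_one]
  field_simp
  ring

lemma deriv_dirichletSolution_zero :
    deriv (dirichletSolution r₁ r₂) 0 = r₂ + dirichletCoeff r₁ r₂ * (r₁ - r₂) := by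
  simp only [dirichletSolution, deriv_expComb, expComb, mul_zero, exp_zero, mul_one]
  ring

end dirichletSolution

theorem derivWithin_Icc_zero_eq_of_ode {a b c r₁ r₂ : ℝ} {u : ℝ → ℝ} (ha : 0 ≤ a) (hc : 0 < c)
    (hr : r₁ ≠ r₂) (h₁ : a * r₁ ^ 2 + b * r₁ - c = 0) (h₂ : a * r₂ ^ 2 + b * r₂ - c = 0)
    (hu : ContDiffOn ℝ 2 u (Icc 0 1))
    (hode : ∀ x ∈ Ioo (0 : ℝ) 1, a * derivWithin (derivWithin u (Icc 0 1)) (Icc 0 1) x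
      + b * derivWithin u (Icc 0 1) x - c * u x = 0)
    (h0 : u 0 = 1) (h1 : u 1 = 1) :
    derivWithin u (Icc 0 1) 0 = deriv (dirichletSolution r₁ r₂) 0 := by
  have hode' : ∀ x ∈ Ioo (0 : ℝ) 1, a * deriv (deriv u) x + b * deriv u x - c * u x = 0 := by
    intro x hx
    rw [← derivWithin_derivWithin_Icc_of_mem_Ioo hx,
      ← derivWithin_of_mem_nhds (Icc_mem_nhds hx.1 hx.2)]
    exact hode x hx
  have heq : EqOn u (dirichletSolution r₁ r₂) (Icc 0 1) :=
    eqOn_of_ode_of_boundary_eq ha hc (hu.mono Ioo_subset_Icc_self) contDiff_expComb.contDiffOn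
      hu.continuousOn contDiff_expComb.continuous.continuousOn hode'
      (fun x _ => expComb_ode h₁ h₂ x)
      (h0.trans dirichletSolution_zero.symm) (h1.trans (dirichletSolution_one hr).symm)
  have h0mem : (0 : ℝ) ∈ Icc (0 : ℝ) 1 := left_mem_Icc.2 zero_le_one
  rw [derivWithin_congr heq (heq h0mem),
    DifferentiableAt.derivWithin (f := dirichletSolution r₁ r₂)
      (contDiff_expComb.differentiable two_ne_zero _) (uniqueDiffOn_Icc zero_lt_one 0 h0mem)]

/-- For `σ = 1` and `σ = -1` the two roots of `a x ^ 2 + b x = c`. -/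
def quadRoot (a b c σ : ℝ) : ℝ := (-b + σ * √(b ^ 2 + 4 * a * c)) / (2 * a)

section quadRoot

variable {a b c σ : ℝ}

lemma quadRoot_spec (ha : a ≠ 0) (hD : 0 ≤ b ^ 2 + 4 * a * c) (hσ : σ ^ 2 = 1) :
    a * quadRoot a b c σ ^ 2 + b * quadRoot a b c σ - c = 0 := by
  have hsq := sq_sqrt hD
  unfold quadRoot
  set S := √(b ^ 2 + 4 * a * c)
  field_simp
  linear_combination (σ ^ 2) * hsq + (b ^ 2 + 4 * a * c) * hσ

lemma quadRoot_neg_one_lt_one (ha : 0 < a) (hD : 0 < b ^ 2 + 4 * a * c) :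
    quadRoot a b c (-1) < quadRoot a b c 1 := by
  have hS := sqrt_pos.2 hD
  unfold quadRoot
  gcongr
  linarith

lemma sqrt_mul_quadRoot {δ : ℝ} (hδ : 0 < δ) :
    √δ * quadRoot (δ * a) (δ * b) c σ = quadRoot a (√δ * b) c σ := by
  obtain ⟨t, ht, rfl⟩ : ∃ t, 0 < t ∧ δ = t ^ 2 := ⟨√δ, sqrt_pos.2 hδ, (sq_sqrt hδ.le).symm⟩
  have hD : √((t ^ 2 * b) ^ 2 + 4 * (t ^ 2 * a) * c) = t * √((t * b) ^ 2 + 4 * a * c) := by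
    rw [show (t ^ 2 * b) ^ 2 + 4 * (t ^ 2 * a) * c = t ^ 2 * ((t * b) ^ 2 + 4 * a * c) by ring,
      sqrt_mul (sq_nonneg t), sqrt_sq ht.le]
  rcases eq_or_ne a 0 with rfl | ha
  · simp [quadRoot]
  unfold quadRoot
  rw [hD, sqrt_sq ht.le]
  field_simp

lemma quadRoot_zero (ha : 0 < a) : quadRoot a 0 c σ = σ * √(c / a) := by
  have h : (0 : ℝ) ^ 2 + 4 * a * c = (2 * a) ^ 2 * (c / a) := by
    field_simp
    ring
  unfold quadRoot
  rw [h, sqrt_mul (sq_nonneg _), sqrt_sq (by linarith)]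
  field_simp
  ring

lemma tendsto_sqrt_nhdsGT_zero : Tendsto (fun δ : ℝ => √δ) (𝓝[>] 0) (𝓝[>] 0) := by
  refine tendsto_nhdsWithin_iff.2 ⟨?_, ?_⟩
  · simpa using continuous_sqrt.continuousWithinAt.tendsto (s := Ioi 0) (x := 0)
  · filter_upwards [self_mem_nhdsWithin] with δ hδ using sqrt_pos.2 hδ

lemma tendsto_sqrt_mul_quadRoot (ha : 0 < a) :
    Tendsto (fun δ => √δ * quadRoot (δ * a) (δ * b) c σ) (𝓝[>] 0) (𝓝 (σ * √(c / a))) := by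
  have hcont : Continuous fun t => quadRoot a (t * b) c σ := by
    unfold quadRoot
    fun_prop
  have hlim := (hcont.tendsto 0).comp (tendsto_sqrt_nhdsGT_zero.mono_right nhdsWithin_le_nhds)
  rw [zero_mul, quadRoot_zero ha] at hlim
  refine hlim.congr' ?_
  filter_upwards [self_mem_nhdsWithin] with δ hδ
  exact (sqrt_mul_quadRoot hδ).symm

end quadRoot

theorem tendsto_mul_deriv_dirichletSolution_zero {ι : Type*} {l : Filter ι} {s r₁ r₂ : ι → ℝ}
    {k₁ k₂ : ℝ} (hk₁ : 0 < k₁) (hk₂ : k₂ < 0) (hs : Tendsto s l (𝓝[>] 0))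
    (h₁ : Tendsto (fun i => s i * r₁ i) l (𝓝 k₁)) (h₂ : Tendsto (fun i => s i * r₂ i) l (𝓝 k₂)) :
    Tendsto (fun i => s i * deriv (dirichletSolution (r₁ i) (r₂ i)) 0) l (𝓝 k₂) := by
  have hinv : Tendsto (fun i => (s i)⁻¹) l atTop := tendsto_inv_nhdsGT_zero.comp hs
  have hcancel : ∀ r : ι → ℝ, (fun i => s i * r i * (s i)⁻¹) =ᶠ[l] r := by
    intro r
    filter_upwards [hs self_mem_nhdsWithin] with i (hi : 0 < s i)
    field_simp
  have hr₁ : Tendsto r₁ l atTop := (h₁.pos_mul_atTop hk₁ hinv).congr' (hcancel r₁)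
  have hr₂ : Tendsto r₂ l atBot := (h₂.neg_mul_atTop hk₂ hinv).congr' (hcancel r₂)
  have hcoeff : Tendsto (fun i => dirichletCoeff (r₁ i) (r₂ i)) l (𝓝 0) := by
    have hexp₂ : Tendsto (fun i => exp (r₂ i)) l (𝓝 0) := tendsto_exp_atBot.comp hr₂
    have hnum : Tendsto (fun i => 1 - exp (r₂ i)) l (𝓝 (1 - 0)) := tendsto_const_nhds.sub hexp₂
    have hden : Tendsto (fun i => exp (r₁ i) - exp (r₂ i)) l atTop := by
      simpa [sub_eq_add_neg] using (tendsto_exp_atTop.comp hr₁).atTop_add hexp₂.neg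
    simpa [dirichletCoeff, div_eq_mul_inv] using hnum.mul (tendsto_inv_atTop_zero.comp hden)
  have hlim := h₂.add (hcoeff.mul (h₁.sub h₂))
  rw [zero_mul, add_zero] at hlim
  refine hlim.congr fun i => ?_
  rw [deriv_dirichletSolution_zero]
  ring

theorem one_dimensional_boundary_derivative
    (A V B : ℝ) (hA : 0 < A) (hV : 0 < V)
    (u : ℝ → ℝ → ℝ)
    (hu2 : ∀ δ > (0:ℝ), ContDiffOn ℝ 2 (u δ) (Icc 0 1))
    (hode : ∀ δ > (0:ℝ), ∀ x ∈ Ioo (0:ℝ) 1,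
      (1 / 2) * δ * A * derivWithin (derivWithin (u δ) (Icc 0 1)) (Icc 0 1) x
        + δ * B * derivWithin (u δ) (Icc 0 1) x - V * u δ x = 0)
    (hbc0 : ∀ δ > (0:ℝ), u δ 0 = 1) (hbc1 : ∀ δ > (0:ℝ), u δ 1 = 1) :
    Tendsto (fun δ => Real.sqrt δ * derivWithin (u δ) (Icc (0:ℝ) 1) 0)
      (𝓝[>] (0:ℝ)) (𝓝 (-Real.sqrt (2 * V / A))) := by
  set k := √(2 * V / A)
  have hk : 0 < k := sqrt_pos.2 (by positivity)
  set r : ℝ → ℝ → ℝ := fun σ δ => quadRoot (δ * (A / 2)) (δ * B) V σ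
  have hscaled (σ : ℝ) : Tendsto (fun δ => √δ * r σ δ) (𝓝[>] 0) (𝓝 (σ * k)) := by
    simpa [show V / (A / 2) = 2 * V / A by ring] using
      tendsto_sqrt_mul_quadRoot (b := B) (c := V) (σ := σ) (half_pos hA)
  refine (tendsto_mul_deriv_dirichletSolution_zero hk (neg_lt_zero.2 hk) tendsto_sqrt_nhdsGT_zero
    (by simpa using hscaled 1) (by simpa using hscaled (-1))).congr' ?_
  filter_upwards [self_mem_nhdsWithin] with δ (hδ : 0 < δ)
  have hD : 0 < (δ * B) ^ 2 + 4 * (δ * (A / 2)) * V := by positivity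
  have hroot (σ : ℝ) (hσ : σ ^ 2 = 1) : (1 / 2) * δ * A * r σ δ ^ 2 + δ * B * r σ δ - V = 0 := by
    rw [show (1 / 2) * δ * A = δ * (A / 2) by ring]
    exact quadRoot_spec (by positivity) hD.le hσ
  rw [derivWithin_Icc_zero_eq_of_ode (by positivity) hV
    (quadRoot_neg_one_lt_one (by positivity) hD).ne' (hroot 1 (by norm_num))
    (hroot (-1) (by norm_num)) (hu2 δ hδ) (hode δ hδ) (hbc0 δ hδ) (hbc1 δ hδ)]
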